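/- Corollary: if a ghost witness W for a program P is not valid because an assertion originating from P can be violated in the witness-instrumented program P_W, then P itself is unsafe with respect to the interleaving semantics. -/
import Mathlib


namespace CW

/-- Thread ids are finite sequences of naturals (creation histories). -/
abbrev TID := List Nat

/-- Actions of the core language `Lang`. -/
inductive Act (Mutex Global L V : Type) : Type where
  | lock (m : Mutex)
  | unlock (m : Mutex)
  | create (tmpl : Nat)
  | localUpd (f : L → L)
  | read (g : Global) (f : L → V → L)
  | write (g : Global) (f : L → V)
  | assert (p : L → Bool)
  | pos (c : L → Bool)
  | neg (c : L → Bool)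

/-- A program: thread templates (numbered CFGs, template 0 is `main`),
    start nodes, initial local state and initial values of globals. -/
structure Prog (Node Mutex Global L V : Type) where
  edges : Nat → Node → Act Mutex Global L V → Node → Prop
  start : Nat → Node
  initLocal : L
  initGlobal : Global → V

/-- A configuration `(L, M, G)`: thread map (template, node, local state, create counter),
    mutex ownership map, and values of globals. -/
structure Config (Node Mutex Global L V : Type) where
  threads : TID → Option (Nat × Node × L × Nat)
  mutexes : Mutex → Option TID
  globals : Global → V

variable {Node Mutex Global L V : Type}

/-- The canonical initial configuration. -/
def initConfig (P : Prog Node Mutex Global L V) : Config Node Mutex Global L V where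
  threads := fun t => if t = ([] : TID) then some (0, P.start 0, P.initLocal, 0) else none
  mutexes := fun _ => none
  globals := P.initGlobal

/-- The initial-state condition: only the initial thread exists, at the start node of main
    with the initial local state, no mutex held, globals at declared initial values. -/
def IsInitGen (startF : Nat → Node) (l0 : L) (g0 : Global → V)
    (c : Config Node Mutex Global L V) : Prop :=
  (∀ t : TID, c.threads t = if t = ([] : TID) then some (0, startF 0, l0, 0) else none) ∧
  (∀ m, c.mutexes m = none) ∧ (∀ g, c.globals g = g0 g)

def IsInit (P : Prog Node Mutex Global L V) (c : Config Node Mutex Global L V) : Prop :=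
  IsInitGen P.start P.initLocal P.initGlobal c

/-- Admissibility of an action for a thread with local state `l` and create counter `cnt`. -/
def admissibleAct (c : Config Node Mutex Global L V) (t : TID) (l : L) (cnt : Nat) :
    Act Mutex Global L V → Prop
  | .lock m => c.mutexes m = none
  | .unlock m => c.mutexes m = some t
  | .create _ => c.threads (t ++ [cnt]) = none
  | .pos p => p l = true
  | .neg p => p l = false
  | _ => True

variable [DecidableEq Mutex] [DecidableEq Global]

/-- The effect of action `a` taken by thread `t` moving to node `v`. -/
def applyAct (startF : Nat → Node) (l0 : L) (c : Config Node Mutex Global L V)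
    (t : TID) (tmpl : Nat) (v : Node) (l : L) (cnt : Nat) :
    Act Mutex Global L V → Config Node Mutex Global L V
  | .lock m =>
      { threads := Function.update c.threads t (some (tmpl, v, l, cnt)),
        mutexes := Function.update c.mutexes m (some t),
        globals := c.globals }
  | .unlock m =>
      { threads := Function.update c.threads t (some (tmpl, v, l, cnt)),
        mutexes := Function.update c.mutexes m none,
        globals := c.globals }
  | .create k =>
      { threads := Function.update
          (Function.update c.threads t (some (tmpl, v, l, cnt + 1)))
          (t ++ [cnt]) (some (k, startF k, l0, 0)),
        mutexes := c.mutexes, globals := c.globals }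
  | .localUpd f =>
      { threads := Function.update c.threads t (some (tmpl, v, f l, cnt)),
        mutexes := c.mutexes, globals := c.globals }
  | .read g f =>
      { threads := Function.update c.threads t (some (tmpl, v, f l (c.globals g), cnt)),
        mutexes := c.mutexes, globals := c.globals }
  | .write g f =>
      { threads := Function.update c.threads t (some (tmpl, v, l, cnt)),
        mutexes := c.mutexes,
        globals := Function.update c.globals g (f l) }
  | _ =>
      { threads := Function.update c.threads t (some (tmpl, v, l, cnt)),
        mutexes := c.mutexes, globals := c.globals }

/-- One consistent step of the interleaving semantics. -/
def Step (P : Prog Node Mutex Global L V) (c : Config Node Mutex Global L V) (t : TID)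
    (e : Node × Act Mutex Global L V × Node) (c' : Config Node Mutex Global L V) : Prop :=
  ∃ tmpl l cnt, c.threads t = some (tmpl, e.1, l, cnt) ∧
    P.edges tmpl e.1 e.2.1 e.2.2 ∧
    admissibleAct c t l cnt e.2.1 ∧
    c' = applyAct P.start P.initLocal c t tmpl e.2.2 l cnt e.2.1

/-- A consistent interleaving of `P`: a sequence of configurations connected by
    admissible thread-labeled steps, starting in the initial state. -/
structure Interleaving (P : Prog Node Mutex Global L V) where
  len : Nat
  states : Fin (len + 1) → Config Node Mutex Global L V
  who : Fin len → TID
  edge : Fin len → Node × Act Mutex Global L V × Node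
  init : IsInit P (states 0)
  consistent : ∀ k : Fin len, Step P (states k.castSucc) (who k) (edge k) (states k.succ)

/-- The assertion at step `k` of interleaving `i` is violated. -/
def Interleaving.ViolatesAt {P : Prog Node Mutex Global L V} (i : Interleaving P)
    (k : Fin i.len) : Prop :=
  ∃ p u v, i.edge k = (u, Act.assert p, v) ∧
    ∃ tmpl l cnt, (i.states k.castSucc).threads (i.who k) = some (tmpl, u, l, cnt) ∧ p l = false

/-- Safety w.r.t. the interleaving semantics. -/
def Safe (P : Prog Node Mutex Global L V) : Prop :=
  ∀ (i : Interleaving P) (k : Fin i.len), ¬ i.ViolatesAt k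

/-- Actions of `Lang_Atomic`: base actions, and atomic blocks `atomic{a; rest}` whose
first statement `a` is the only possibly inadmissible one. -/
inductive ActA (Mutex Global L V : Type) : Type where
  | base (a : Act Mutex Global L V)
  | atomic (a : Act Mutex Global L V) (rest : List (Act Mutex Global L V))

/-- Programs of `Lang_Atomic`. -/
structure ProgA (Node Mutex Global L V : Type) where
  edges : Nat → Node → ActA Mutex Global L V → Node → Prop
  start : Nat → Node
  initLocal : L
  initGlobal : Global → V

/-- Always-admissible statement kinds allowed inside the tail of an atomic block. -/
def Act.Simple : Act Mutex Global L V → Prop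
  | .localUpd _ => True
  | .read _ _ => True
  | .write _ _ => True
  | .assert _ => True
  | _ => False

/-- Apply one action of a thread `t` (keeping it at node `v`). -/
def applyOne (startF : Nat → Node) (l0 : L) (c : Config Node Mutex Global L V)
    (t : TID) (v : Node) (a : Act Mutex Global L V) : Config Node Mutex Global L V :=
  match c.threads t with
  | some (tmpl, _, l, cnt) => applyAct startF l0 c t tmpl v l cnt a
  | none => c

/-- Apply a sequence of actions of thread `t` in one atomic step. -/
def applyList (startF : Nat → Node) (l0 : L) (c : Config Node Mutex Global L V)
    (t : TID) (v : Node) (as_ : List (Act Mutex Global L V)) : Config Node Mutex Global L V :=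
  as_.foldl (fun c a => applyOne startF l0 c t v a) c

/-- One step of the interleaving semantics of `Lang_Atomic`; an atomic block is executed
as a whole, and is admissible iff its first statement is. -/
def StepA (P : ProgA Node Mutex Global L V) (c : Config Node Mutex Global L V) (t : TID)
    (e : Node × ActA Mutex Global L V × Node) (c' : Config Node Mutex Global L V) : Prop :=
  ∃ tmpl l cnt, c.threads t = some (tmpl, e.1, l, cnt) ∧
    P.edges tmpl e.1 e.2.1 e.2.2 ∧
    match e.2.1 with
    | .base a => admissibleAct c t l cnt a ∧
        c' = applyAct P.start P.initLocal c t tmpl e.2.2 l cnt a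
    | .atomic a rest => admissibleAct c t l cnt a ∧ (∀ b ∈ rest, b.Simple) ∧
        c' = applyList P.start P.initLocal
              (applyAct P.start P.initLocal c t tmpl e.2.2 l cnt a) t e.2.2 rest

/-- A consistent interleaving of a `Lang_Atomic` program. -/
structure InterleavingA (P : ProgA Node Mutex Global L V) where
  len : Nat
  states : Fin (len + 1) → Config Node Mutex Global L V
  who : Fin len → TID
  edge : Fin len → Node × ActA Mutex Global L V × Node
  init : IsInitGen P.start P.initLocal P.initGlobal (states 0)
  consistent : ∀ k : Fin len, StepA P (states k.castSucc) (who k) (edge k) (states k.succ)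

/-- An assertion (possibly inside an atomic block) is violated at step `k`: it evaluates to
false after executing the preceding statements of the block on the preceding state. -/
def InterleavingA.ViolatesAt {P : ProgA Node Mutex Global L V} (i : InterleavingA P)
    (k : Fin i.len) : Prop :=
  ∃ tmpl l cnt,
    (i.states k.castSucc).threads (i.who k) = some (tmpl, (i.edge k).1, l, cnt) ∧
    match (i.edge k).2.1 with
    | .base a => ∃ p, a = Act.assert p ∧ p l = false
    | .atomic a rest =>
        (∃ p, a = Act.assert p ∧ p l = false) ∨
        ∃ n p, rest[n]? = some (Act.assert p) ∧
          ∃ tmpl' nd l' cnt',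
            ((applyList P.start P.initLocal
                (applyAct P.start P.initLocal (i.states k.castSucc) (i.who k) tmpl
                  (i.edge k).2.2 l cnt a)
                (i.who k) (i.edge k).2.2 (rest.take n)).threads (i.who k))
              = some (tmpl', nd, l', cnt') ∧ p l' = false

/-- Safety of a `Lang_Atomic` program w.r.t. the interleaving semantics. -/
def SafeA (P : ProgA Node Mutex Global L V) : Prop :=
  ∀ (i : InterleavingA P) (k : Fin i.len), ¬ i.ViolatesAt k

variable {GGlobal GLoc : Type} [DecidableEq GGlobal]

/-- Ghost updates: statements over the extended state that only write ghost locals and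
ghost globals (reading program and ghost state is allowed). -/
def GhostUpd : Act Mutex (Global ⊕ GGlobal) (L × GLoc) V → Prop
  | .localUpd f => ∀ p, (f p).1 = p.1
  | .read _ f => ∀ p v, (f p v).1 = p.1
  | .write g _ => ∃ gg, g = Sum.inr gg
  | _ => False

/-- Ghost statements used to evaluate and assert invariants: ghost updates or asserts. -/
def GhostStmt (b : Act Mutex (Global ⊕ GGlobal) (L × GLoc) V) : Prop :=
  GhostUpd b ∨ ∃ p, b = Act.assert p

/-- A ghost witness `(D_g, X_g, U, I)` for `P`: initial values of fresh ghost globals,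
initial ghost local state, ghost updates per edge, and location invariants per node
(given as ghost statement sequences evaluating and asserting the invariant). -/
structure Witness (P : Prog Node Mutex Global L V) (GGlobal GLoc : Type) where
  ginit : GGlobal → V
  glinit : GLoc
  upd : Nat → Node → Node → Option (List (Act Mutex (Global ⊕ GGlobal) (L × GLoc) V))
  inv : Node → Option (List (Act Mutex (Global ⊕ GGlobal) (L × GLoc) V))

/-- Well-formedness: ghost updates only modify ghost variables; invariant code consists of
ghost statements. -/
def Witness.WF {P : Prog Node Mutex Global L V} (W : Witness P GGlobal GLoc) : Prop :=
  (∀ tmpl u v us, W.upd tmpl u v = some us → ∀ b ∈ us, GhostUpd (GLoc := GLoc) b) ∧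
  (∀ u bs, W.inv u = some bs → ∀ b ∈ bs, GhostStmt (GLoc := GLoc) b)

/-- Lift a program action to the extended (ghost-instrumented) state spaces. -/
def liftAct : Act Mutex Global L V → Act Mutex (Global ⊕ GGlobal) (L × GLoc) V
  | .lock m => .lock m
  | .unlock m => .unlock m
  | .create k => .create k
  | .localUpd f => .localUpd (fun p => (f p.1, p.2))
  | .read g f => .read (.inl g) (fun p v => (f p.1 v, p.2))
  | .write g f => .write (.inl g) (fun p => f p.1)
  | .assert p => .assert (fun q => p q.1)
  | .pos c => .pos (fun q => c q.1)
  | .neg c => .neg (fun q => c q.1)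

/-- The atomic block evaluating and asserting an invariant. -/
def invAct : List (Act Mutex (Global ⊕ GGlobal) (L × GLoc) V) →
    ActA Mutex (Global ⊕ GGlobal) (L × GLoc) V
  | [] => .atomic (.localUpd id) []
  | b :: bs => .atomic b bs

/-- `δ_W`: the instrumented action on an edge — the original action fused atomically with
the ghost updates, if any. -/
def deltaAct {P : Prog Node Mutex Global L V} (W : Witness P GGlobal GLoc)
    (tmpl : Nat) (u v : Node) (a : Act Mutex Global L V) :
    ActA Mutex (Global ⊕ GGlobal) (L × GLoc) V :=
  match W.upd tmpl u v with
  | some us => .atomic (liftAct a) us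
  | none => .base (liftAct a)

/-- Source node of the instrumented edge: the new node `(u, v)` if `Ψ_W u` is defined. -/
def srcNode {P : Prog Node Mutex Global L V} (W : Witness P GGlobal GLoc)
    (u v : Node) : Node ⊕ (Node × Node) :=
  if (W.inv u).isSome then .inr (u, v) else .inl u

/-- The witness-instrumented program `P_W`. -/
def instrument (P : Prog Node Mutex Global L V) (W : Witness P GGlobal GLoc) :
    ProgA (Node ⊕ (Node × Node)) Mutex (Global ⊕ GGlobal) (L × GLoc) V where
  edges := fun tmpl n act n' =>
    (∃ u a v, P.edges tmpl u a v ∧ n = srcNode W u v ∧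
        act = deltaAct W tmpl u v a ∧ n' = .inl v) ∨
    (∃ u a v bs, P.edges tmpl u a v ∧ W.inv u = some bs ∧
        n = .inl u ∧ act = invAct bs ∧ n' = .inr (u, v))
  start := fun k => .inl (P.start k)
  initLocal := (P.initLocal, W.glinit)
  initGlobal := Sum.elim P.initGlobal W.ginit

/-- Project an instrumented node back to the original node. -/
def projNode : Node ⊕ (Node × Node) → Node
  | .inl u => u
  | .inr p => p.1

/-- `π_P`: project a configuration of `P_W` back to a configuration of `P` (remove ghost
variables; keep program variables, mutexes and thread locations). -/
def projConfig (c : Config (Node ⊕ (Node × Node)) Mutex (Global ⊕ GGlobal) (L × GLoc) V) :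
    Config Node Mutex Global L V where
  threads := fun t => (c.threads t).map (fun e => (e.1, projNode e.2.1, e.2.2.1.1, e.2.2.2))
  mutexes := c.mutexes
  globals := fun g => c.globals (.inl g)

/-- A step of an instrumented interleaving is an inserted invariant-assertion step. -/
def IsInvStep {P : Prog Node Mutex Global L V} (W : Witness P GGlobal GLoc)
    (e : (Node ⊕ (Node × Node)) × ActA Mutex (Global ⊕ GGlobal) (L × GLoc) V ×
          (Node ⊕ (Node × Node))) : Prop :=
  ∃ u v bs, W.inv u = some bs ∧ e = (.inl u, invAct bs, .inr (u, v))

/-! ### Auxiliary development for the corollary -/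

lemma Config.ext' {N M G LL VV : Type} {c₁ c₂ : Config N M G LL VV}
    (h1 : c₁.threads = c₂.threads) (h2 : c₁.mutexes = c₂.mutexes)
    (h3 : c₁.globals = c₂.globals) : c₁ = c₂ := by
  cases c₁; cases c₂; simp_all

lemma projNode_srcNode {P : Prog Node Mutex Global L V} (W : Witness P GGlobal GLoc)
    (u v : Node) : projNode (srcNode W u v) = u := by
  unfold srcNode; split <;> rfl

/-- `EndsAt P c`: there is a consistent interleaving of `P` ending in `c`. -/
def EndsAt (P : Prog Node Mutex Global L V) (c : Config Node Mutex Global L V) : Prop :=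
  ∃ i : Interleaving P, i.states (Fin.last i.len) = c

lemma endsAt_init {P : Prog Node Mutex Global L V} {c} (h : IsInit P c) : EndsAt P c :=
  ⟨⟨0, fun _ => c, Fin.elim0, Fin.elim0, h, fun k => k.elim0⟩, rfl⟩

/-- Extend an interleaving by one step at the end. -/
def Interleaving.extend {P : Prog Node Mutex Global L V} (i : Interleaving P) (t : TID)
    (e : Node × Act Mutex Global L V × Node) (c' : Config Node Mutex Global L V)
    (hs : Step P (i.states (Fin.last i.len)) t e c') : Interleaving P where
  len := i.len + 1
  states := Fin.lastCases c' i.states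
  who := Fin.lastCases t i.who
  edge := Fin.lastCases e i.edge
  init := by
    have h0 : (0 : Fin (i.len + 1 + 1)) = Fin.castSucc 0 := rfl
    rw [h0]; simp only [Fin.lastCases_castSucc]; exact i.init
  consistent := by
    intro k
    induction k using Fin.lastCases with
    | last =>
        simp only [Fin.succ_last, Fin.lastCases_castSucc, Fin.lastCases_last]
        exact hs
    | cast j =>
        simp only [Fin.succ_castSucc, Fin.lastCases_castSucc]
        exact i.consistent j

lemma endsAt_step {P : Prog Node Mutex Global L V} {c c' t e}
    (h : EndsAt P c) (hs : Step P c t e c') : EndsAt P c' := by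
  obtain ⟨i, hi⟩ := h
  exact ⟨i.extend t e c' (hi ▸ hs), by simp [Interleaving.extend]⟩

/-- An interleaving that ends with a violated assertion shows unsafety. -/
lemma unsafe_of_endsAt {P : Prog Node Mutex Global L V} {c t tmpl u l cnt v} {p : L → Bool}
    (h : EndsAt P c) (hthr : c.threads t = some (tmpl, u, l, cnt)) (hp : p l = false)
    (hPe : P.edges tmpl u (.assert p) v) : ¬ Safe P := by
  obtain ⟨i, hi⟩ := h
  intro hSafe
  have hs : Step P (i.states (Fin.last i.len)) t (u, .assert p, v)
      (applyAct P.start P.initLocal c t tmpl v l cnt (.assert p)) := by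
    rw [hi]; exact ⟨tmpl, l, cnt, hthr, hPe, trivial, rfl⟩
  refine hSafe (i.extend t (u, .assert p, v) _ hs) (Fin.last i.len) ?_
  refine ⟨p, u, v, by simp [Interleaving.extend], tmpl, l, cnt, ?_, hp⟩
  show ((Interleaving.extend i t (u, Act.assert p, v) _ hs).states
      ((Fin.last i.len).castSucc)).threads
      ((Interleaving.extend i t (u, Act.assert p, v) _ hs).who (Fin.last i.len)) = _
  simp only [Interleaving.extend, Fin.lastCases_castSucc, Fin.lastCases_last, hi]
  exact hthr

lemma proj_threads {c : Config (Node ⊕ (Node × Node)) Mutex (Global ⊕ GGlobal) (L × GLoc) V}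
    {t tmpl nd l cnt} (h : c.threads t = some (tmpl, nd, l, cnt)) :
    (projConfig c).threads t = some (tmpl, projNode nd, l.1, cnt) := by
  simp [projConfig, h]

lemma admissible_lift {c : Config (Node ⊕ (Node × Node)) Mutex (Global ⊕ GGlobal) (L × GLoc) V}
    {t : TID} {l : L × GLoc} {cnt : Nat} (a : Act Mutex Global L V)
    (h : admissibleAct c t l cnt (liftAct a)) :
    admissibleAct (projConfig c) t l.1 cnt a := by
  cases a <;> simp_all [liftAct, admissibleAct, projConfig]

lemma proj_applyAct_lift (P : Prog Node Mutex Global L V) (W : Witness P GGlobal GLoc)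
    (c : Config (Node ⊕ (Node × Node)) Mutex (Global ⊕ GGlobal) (L × GLoc) V)
    (t : TID) (tmpl : Nat) (v : Node) (l : L × GLoc) (cnt : Nat)
    (a : Act Mutex Global L V) :
    projConfig (applyAct (instrument P W).start (instrument P W).initLocal c t tmpl
      (Sum.inl v) l cnt (liftAct a)) =
    applyAct P.start P.initLocal (projConfig c) t tmpl v l.1 cnt a := by
  have hne : t ≠ t ++ [cnt] := by
    intro h; simpa using congrArg List.length h
  cases a with
  | lock m =>
      refine Config.ext' (funext fun x => ?_) rfl rfl
      by_cases hx : x = t <;>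
        simp [projConfig, applyAct, liftAct, projNode, Function.update_of_ne, hx]
  | unlock m =>
      refine Config.ext' (funext fun x => ?_) rfl rfl
      by_cases hx : x = t <;>
        simp [projConfig, applyAct, liftAct, projNode, Function.update_of_ne, hx]
  | create k =>
      refine Config.ext' (funext fun x => ?_) rfl rfl
      rcases eq_or_ne x (t ++ [cnt]) with rfl | hx1
      · simp [projConfig, applyAct, liftAct, projNode, instrument,
          Function.update_self, Function.update_of_ne (Ne.symm hne)]
      · by_cases hx2 : x = t <;>
          simp [projConfig, applyAct, liftAct, projNode, instrument,
            Function.update_of_ne, hx1, hx2]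
  | localUpd f =>
      refine Config.ext' (funext fun x => ?_) rfl rfl
      by_cases hx : x = t <;>
        simp [projConfig, applyAct, liftAct, projNode, Function.update_of_ne, hx]
  | read g f =>
      refine Config.ext' (funext fun x => ?_) rfl rfl
      by_cases hx : x = t <;>
        simp [projConfig, applyAct, liftAct, projNode, Function.update_of_ne, hx]
  | write g f =>
      refine Config.ext' (funext fun x => ?_) rfl (funext fun g' => ?_)
      · by_cases hx : x = t <;>
          simp [projConfig, applyAct, liftAct, projNode, Function.update_of_ne, hx]
      · by_cases hg : g' = g <;>
          simp [projConfig, applyAct, liftAct, Function.update_of_ne, hg,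
            Function.update_apply]
  | assert p =>
      refine Config.ext' (funext fun x => ?_) rfl rfl
      by_cases hx : x = t <;>
        simp [projConfig, applyAct, liftAct, projNode, Function.update_of_ne, hx]
  | pos p =>
      refine Config.ext' (funext fun x => ?_) rfl rfl
      by_cases hx : x = t <;>
        simp [projConfig, applyAct, liftAct, projNode, Function.update_of_ne, hx]
  | neg p =>
      refine Config.ext' (funext fun x => ?_) rfl rfl
      by_cases hx : x = t <;>
        simp [projConfig, applyAct, liftAct, projNode, Function.update_of_ne, hx]

lemma applyAct_threads_self
    (S : Nat → Node ⊕ (Node × Node)) (l0 : L × GLoc)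
    (c : Config (Node ⊕ (Node × Node)) Mutex (Global ⊕ GGlobal) (L × GLoc) V)
    (t : TID) (tmpl : Nat) (v : Node ⊕ (Node × Node)) (l : L × GLoc) (cnt : Nat)
    (a : Act Mutex (Global ⊕ GGlobal) (L × GLoc) V) :
    ∃ l' cnt', (applyAct S l0 c t tmpl v l cnt a).threads t = some (tmpl, v, l', cnt') := by
  have hne : t ≠ t ++ [cnt] := by
    intro h; simpa using congrArg List.length h
  cases a <;> simp [applyAct, Function.update_apply, hne]

lemma ghost_applyAct
    (S : Nat → Node ⊕ (Node × Node)) (l0 : L × GLoc)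
    {c : Config (Node ⊕ (Node × Node)) Mutex (Global ⊕ GGlobal) (L × GLoc) V}
    {t : TID} {tmpl : Nat} {nd : Node ⊕ (Node × Node)} {l : L × GLoc} {cnt : Nat}
    {b : Act Mutex (Global ⊕ GGlobal) (L × GLoc) V} (hb : GhostStmt b)
    (ht : c.threads t = some (tmpl, nd, l, cnt)) (v : Node ⊕ (Node × Node))
    (hv : projNode v = projNode nd) :
    projConfig (applyAct S l0 c t tmpl v l cnt b) = projConfig c ∧
    ∃ l', (applyAct S l0 c t tmpl v l cnt b).threads t = some (tmpl, v, l', cnt) ∧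
      l'.1 = l.1 := by
  have key : ∀ (l' : L × GLoc), l'.1 = l.1 →
      projConfig (Config.mk (Function.update c.threads t (some (tmpl, v, l', cnt)))
        c.mutexes c.globals) = projConfig c := by
    intro l' hl'
    refine Config.ext' (funext fun x => ?_) rfl rfl
    by_cases hx : x = t
    · subst hx; simp [projConfig, Function.update_apply, ht, hv, hl']
    · simp [projConfig, Function.update_apply, hx]
  rcases hb with hupd | ⟨p, rfl⟩
  · cases b with
    | localUpd f =>
        exact ⟨key (f l) (hupd l), f l, by simp [applyAct], hupd l⟩
    | read g f =>
        exact ⟨key (f l (c.globals g)) (hupd l _), f l (c.globals g),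
          by simp [applyAct], hupd l _⟩
    | write g f =>
        obtain ⟨gg, rfl⟩ := hupd
        refine ⟨?_, l, by simp [applyAct], rfl⟩
        refine Config.ext' ?_ rfl (funext fun g' => ?_)
        · exact congrArg Config.threads (key l rfl)
        · simp [applyAct, projConfig, Function.update_apply]
    | lock m => exact absurd hupd (by simp [GhostUpd])
    | unlock m => exact absurd hupd (by simp [GhostUpd])
    | create k => exact absurd hupd (by simp [GhostUpd])
    | assert p => exact absurd hupd (by simp [GhostUpd])
    | pos p => exact absurd hupd (by simp [GhostUpd])
    | neg p => exact absurd hupd (by simp [GhostUpd])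
  · exact ⟨key l rfl, l, by simp [applyAct], rfl⟩

lemma ghost_applyList
    (S : Nat → Node ⊕ (Node × Node)) (l0 : L × GLoc)
    {t : TID} {v : Node ⊕ (Node × Node)}
    (bs : List (Act Mutex (Global ⊕ GGlobal) (L × GLoc) V))
    (hbs : ∀ b ∈ bs, GhostStmt b) :
    ∀ {c : Config (Node ⊕ (Node × Node)) Mutex (Global ⊕ GGlobal) (L × GLoc) V}
      {tmpl l cnt}, c.threads t = some (tmpl, v, l, cnt) →
      projConfig (applyList S l0 c t v bs) = projConfig c := by
  induction bs with
  | nil => intro c _ _ _ _; rfl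
  | cons b bs ih =>
      intro c tmpl l cnt ht
      obtain ⟨heq, l', ht', _⟩ :=
        ghost_applyAct S l0 (hbs b (by simp)) ht v rfl
      have hone : applyOne S l0 c t v b = applyAct S l0 c t tmpl v l cnt b := by
        simp [applyOne, ht]
      have hl : applyList S l0 c t v (b :: bs)
          = applyList S l0 (applyAct S l0 c t tmpl v l cnt b) t v bs := by
        simp [applyList, hone]
      rw [hl, ih (fun b hb => hbs b (by simp [hb])) ht', heq]

/-- Simulation: each step of the instrumented program projects to a stutter or
a step of `P`. -/
lemma sim_step (P : Prog Node Mutex Global L V) (W : Witness P GGlobal GLoc) (hW : W.WF)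
    {c c' : Config (Node ⊕ (Node × Node)) Mutex (Global ⊕ GGlobal) (L × GLoc) V} {t e}
    (h : StepA (instrument P W) c t e c') :
    projConfig c' = projConfig c ∨
      ∃ e₀, Step P (projConfig c) t e₀ (projConfig c') := by
  obtain ⟨e1, e2, e3⟩ := e
  obtain ⟨tmpl, l, cnt, ht, hedges, hrest⟩ := h
  rcases hedges with ⟨u, a, v, hPe, hn, hact, hn'⟩ | ⟨u, a, v, bs, hPe, hinv, hn, hact, hn'⟩
  · -- instrumented original edge
    subst hn hact hn'
    right
    refine ⟨(u, a, v), tmpl, l.1, cnt, ?_, hPe, ?_, ?_⟩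
    · rw [proj_threads ht, projNode_srcNode]
    · cases hupd : W.upd tmpl u v <;> simp only [deltaAct, hupd] at hrest <;>
        exact admissible_lift a hrest.1
    · cases hupd : W.upd tmpl u v with
      | none =>
          simp only [deltaAct, hupd] at hrest
          rw [hrest.2, proj_applyAct_lift]
      | some us =>
          simp only [deltaAct, hupd] at hrest
          obtain ⟨_, _, hc'⟩ := hrest
          obtain ⟨l', cnt', ht'⟩ := applyAct_threads_self (instrument P W).start
            (instrument P W).initLocal c t tmpl (Sum.inl v) l cnt (liftAct a)
          rw [hc', ghost_applyList _ _ us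
            (fun b hb => Or.inl (hW.1 tmpl u v us hupd b hb)) ht',
            proj_applyAct_lift]
  · -- inserted invariant step: stutter
    subst hn hact hn'
    left
    have hgs : ∀ b ∈ bs, GhostStmt b := hW.2 u bs hinv
    have hproj : projNode (Sum.inr (u, v) : Node ⊕ (Node × Node))
        = projNode (Sum.inl u : Node ⊕ (Node × Node)) := rfl
    cases bs with
    | nil =>
        simp only [invAct] at hrest
        obtain ⟨_, _, hc'⟩ := hrest
        obtain ⟨heq, l', ht', _⟩ :=
          ghost_applyAct (instrument P W).start (instrument P W).initLocal
            (b := Act.localUpd id) (Or.inl fun _ => rfl) ht (Sum.inr (u, v)) hproj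
        rw [hc']
        exact heq
    | cons b bs' =>
        simp only [invAct] at hrest
        obtain ⟨_, _, hc'⟩ := hrest
        obtain ⟨heq, l', ht', _⟩ :=
          ghost_applyAct (instrument P W).start (instrument P W).initLocal
            (hgs b (by simp)) ht (Sum.inr (u, v)) hproj
        rw [hc', ghost_applyList _ _ bs' (fun b hb => hgs b (by simp [hb])) ht', heq]

/-- Corollary (preservation of violation): if a ghost witness `W` for a
program `P` is not valid because an assertion originating from `P` can be violated in the
witness-instrumented program `P_W`, then `P` itself is unsafe w.r.t. the interleaving
semantics. -/
theorem witness_invalid_by_original_assertion_implies_unsafe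
    (P : Prog Node Mutex Global L V) (W : Witness P GGlobal GLoc) (hW : W.WF) :
    (∃ (i' : InterleavingA (instrument P W)) (k' : Fin i'.len) (tmpl : Nat)
      (p : L → Bool) (u v : Node),
      i'.edge k' = (srcNode W u v, deltaAct W tmpl u v (Act.assert p), Sum.inl v) ∧
      i'.ViolatesAt k') →
    ¬ Safe P := by
  rintro ⟨i', k', tmpl, p, u, v, hedge, hviol⟩
  -- all projected states along the instrumented run are reachable in `P`
  have reach : ∀ n (hn : n < i'.len + 1), EndsAt P (projConfig (i'.states ⟨n, hn⟩)) := by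
    intro n
    induction n with
    | zero =>
        intro hn
        apply endsAt_init
        obtain ⟨h1, h2, h3⟩ := i'.init
        refine ⟨fun t => ?_, fun m => h2 m, fun g => h3 (Sum.inl g)⟩
        by_cases htt : t = ([] : TID)
        · subst htt
          have ht := h1 ([] : TID)
          rw [if_pos rfl] at ht
          simp [projConfig, ht, projNode, instrument]
        · have ht := h1 t
          rw [if_neg htt] at ht
          simp [projConfig, ht, htt]
    | succ m ih =>
        intro hn
        have hm : m < i'.len := Nat.lt_of_succ_lt_succ hn
        rcases sim_step P W hW (i'.consistent ⟨m, hm⟩) with heq | ⟨e₀, hs⟩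
        · have goal' : EndsAt P (projConfig (i'.states (⟨m, hm⟩ : Fin i'.len).castSucc)) :=
            ih (Nat.lt_succ_of_lt hm)
          exact heq.symm ▸ goal'
        · exact endsAt_step (ih (Nat.lt_succ_of_lt hm)) hs
  -- extract the violated original assertion
  obtain ⟨tv, lv, cv, hth, hmat⟩ := hviol
  rw [hedge] at hth hmat
  dsimp only at hth hmat
  -- the violated predicate is the lifted one
  have hfalse : p lv.1 = false := by
    rcases hupd : W.upd tmpl u v with _ | us <;> simp only [deltaAct, hupd] at hmat
    · obtain ⟨p', hpe, hpf⟩ := hmat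
      simp only [liftAct, Act.assert.injEq] at hpe
      rw [← hpe] at hpf
      exact hpf
    · rcases hmat with ⟨p', hpe, hpf⟩ | ⟨n, p', hget, _⟩
      · simp only [liftAct, Act.assert.injEq] at hpe
        rw [← hpe] at hpf
        exact hpf
      · have hmem : Act.assert p' ∈ us := List.mem_of_getElem? hget
        have := hW.1 tmpl u v us hupd _ hmem
        simp [GhostUpd] at this
  -- the consistency of step `k'` gives the corresponding edge of `P`
  obtain ⟨tc, lc, cc, hth2, hed2, hrest2⟩ := i'.consistent k'
  rw [hedge] at hth2 hed2
  dsimp only at hth2 hed2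
  rw [hth] at hth2
  simp only [Option.some.injEq, Prod.mk.injEq] at hth2
  obtain ⟨htc, -, hlc, hcc⟩ := hth2
  subst htc hlc hcc
  rcases hed2 with ⟨u₀, a₀, v₀, hPe, hsrc, hdel, hnl⟩ |
    ⟨u₀, a₀, v₀, bs, -, -, -, -, hnr⟩
  · -- original edge
    have hv0 : v₀ = v := by
      injection hnl.symm with h
    subst hv0
    have hlift : liftAct (GGlobal := GGlobal) (GLoc := GLoc) (Act.assert p) = liftAct a₀ := by
      rcases h1 : W.upd tmpl u v₀ with _ | us <;>
        rcases h2 : W.upd tv u₀ v₀ with _ | us' <;>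
          simp [deltaAct, h1, h2] at hdel
      · exact hdel
      · exact hdel.1
    cases a₀ <;> simp only [liftAct, Act.assert.injEq, reduceCtorEq] at hlift
    case assert p₀ =>
    have hp0 : p₀ lv.1 = false := by
      have := congrFun hlift lv
      rw [← this]
      exact hfalse
    have hu : u₀ = u := by
      unfold srcNode at hsrc
      split_ifs at hsrc <;> simp_all
    subst hu
    have hEnds : EndsAt P (projConfig (i'.states k'.castSucc)) :=
      reach k'.val (by omega)
    have hthp : (projConfig (i'.states k'.castSucc)).threads (i'.who k')
        = some (tv, u₀, lv.1, cv) := by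
      rw [proj_threads hth, projNode_srcNode]
    exact unsafe_of_endsAt hEnds hthp hp0 hPe
  · -- cannot be an inserted invariant edge: target has the wrong shape
    exact absurd hnr (by simp)
end CW
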